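/- The matrix map G ↦ G Gᵀ G on ℝ^{2×2} is monotone: for all A, B ∈ ℝ^{2×2}, (A Aᵀ A − B Bᵀ B) : (A − B) ≥ 0, where X : Y = trace(Xᵀ Y) denotes the Frobenius inner product. -/
import Mathlib


open Matrix

lemma tr_sq_nonneg (X : Matrix (Fin 2) (Fin 2) ℝ) : 0 ≤ trace (Xᵀ * X) := by
  simp [trace, Matrix.mul_apply, Fin.sum_univ_two, Matrix.transpose_apply, Matrix.diag]
  nlinarith [sq_nonneg (X 0 0), sq_nonneg (X 0 1), sq_nonneg (X 1 0), sq_nonneg (X 1 1)]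

/-- The map `G ↦ G Gᵀ G` on real `2 × 2` matrices is monotone with
respect to the Frobenius inner product `X : Y = trace (Xᵀ Y)`. -/
theorem cubic_map_monotone (A B : Matrix (Fin 2) (Fin 2) ℝ) :
    0 ≤ trace ((A * Aᵀ * A - B * Bᵀ * B)ᵀ * (A - B)) := by
  have key : 2 * trace ((A * Aᵀ * A - B * Bᵀ * B)ᵀ * (A - B)) =
      trace (((A - B) * Aᵀ)ᵀ * ((A - B) * Aᵀ)) +
      trace (((A - B) * Bᵀ)ᵀ * ((A - B) * Bᵀ)) +
      trace ((Aᵀ * A - Bᵀ * B)ᵀ * (Aᵀ * A - Bᵀ * B)) := by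
    simp only [trace, Matrix.mul_apply, Matrix.sub_apply, Matrix.transpose_apply,
      Fin.sum_univ_two, Matrix.diag]
    ring
  have h1 := tr_sq_nonneg ((A - B) * Aᵀ)
  have h2 := tr_sq_nonneg ((A - B) * Bᵀ)
  have h3 := tr_sq_nonneg (Aᵀ * A - Bᵀ * B)
  linarith
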